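/- arXiv:2401.15694 — 2 statements merged into one kernel-verified Lean document; each statement's English description precedes it below -/
import Mathlib

section
/- Change of measure for constrained objectives: if for every state x the integrated likelihood q(x) under prior Π being zero implies the integrated likelihood q_c(x) under prior Π_c is also zero, then for any Markov policy π and any reward function r_c on state-action pairs, the expected total reward under the Π_c-predictive law equals the expected total reward under the Π-predictive law of the reweighted reward r̃_c(x, δ) = r_c(x, δ) · q_c(x)/q(x) (set to 0 when q(x) = 0). -/
open Finset
open scoped Classical

theorem mul_ite_mul_div_of_eq_zero_imp {K : Type*} [Field K] {a b : K}
    (hab : a = 0 → b = 0) (c : K) :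
    a * (if a = 0 then 0 else c * (b / a)) = b * c := by
  by_cases ha : a = 0
  · simp [ha, hab ha]
  · rw [if_neg ha]
    field_simp

/-- change of measure for constrained objectives.  If `q x = 0` implies
`q_c x = 0` (absolute continuity of integrated likelihoods), then for a Markov policy
`pol` the expected total reward under the `Π_c`-predictive law
(`P_c^π(X_t = x) = g_t^π(x) q_c(x)`) of the reward `r_c` equals the expected total reward
under the `Π`-predictive law (`P^π(X_t = x) = g_t^π(x) q(x)`) of the reweighted reward
`r̃_c(x, δ) = r_c(x, δ) · q_c(x)/q(x)` (set to `0` when `q x = 0`). -/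
theorem change_of_measure_constrained_reward {X : Type*} [Fintype X] (n : ℕ)
    (g : ℕ → X → ℝ) (q qc : X → ℝ)
    (habs : ∀ x, q x = 0 → qc x = 0)
    (rc : X → ℝ → ℝ) (pol : X → ℝ) :
    ∑ t ∈ Finset.range (n + 1), ∑ x, (g t x * qc x) * rc x (pol x) =
      ∑ t ∈ Finset.range (n + 1), ∑ x, (g t x * q x) *
        (if q x = 0 then 0 else rc x (pol x) * (qc x / q x)) := by
  refine sum_congr rfl fun t _ => sum_congr rfl fun x _ => ?_
  rw [mul_assoc, mul_assoc, mul_ite_mul_div_of_eq_zero_imp (habs x)]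
end

section
/- Mixture-prior representation of the robustness Lagrangian: for λ ≥ 0, the Lagrangian E^π_Π[Σ_t r(X_t, δ_t)] + λ·E^π_{LI}[Σ_t r_{LI}(X_t, δ_t)] arising in the prior-robust CMDP can be written as (1+λ) times an expected total reward under the predictive law of the mixture prior Π_mix = (1/(1+λ))Π + (λ/(1+λ))Π_LI with a state-dependent reweighted reward; specifically, for any state-reward functions whose expectations factor through predictive probabilities P_μ^π(X_t = x) = g_t^π(x) q_μ(x), one has E_Π^π[Σ_t r(X_t, δ_t)] + λ E_{LI}^π[Σ_t r_{LI}(X_t, δ_t)] = Σ_t Σ_x g_t^π(x)·[q_Π(x) r(x, π(x)) + λ q_{LI}(x) r_{LI}(x, π(x))], which is the expected total reward under Π_mix of the reward r_mix(x, δ) = (q_Π(x) r(x,δ) + λ q_{LI}(x) r_{LI}(x,δ))/q_mix(x) scaled by (1+λ), where q_mix = (q_Π + λ q_{LI})/(1+λ), provided q_mix(x) > 0 whenever the numerator is nonzero. -/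
open Finset

/-! Both terms of the Lagrangian share the policy factor `g_t^π(x)`, so the Lagrangian is a single
sum of `g_t^π(x)` against `q_Π r + λ q_LI r_LI`. Dividing that numerator by the mixture
likelihood and multiplying back by it changes nothing, except where `q_mix` vanishes; there
the numerator vanishes too, and Lean's `a / 0 = 0` makes the reweighted reward `0` as well. -/

theorem sum_sum_mul_mul_add_mul_sum_sum {ι X R : Type*} [CommSemiring R]
    (s : Finset ι) (t : Finset X) (g : ι → X → R) (p p' u u' : X → R) (c : R) :
    (∑ i ∈ s, ∑ x ∈ t, g i x * p x * u x) + c * ∑ i ∈ s, ∑ x ∈ t, g i x * p' x * u' x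
      = ∑ i ∈ s, ∑ x ∈ t, g i x * (p x * u x + c * p' x * u' x) := by
  simp only [mul_sum, ← sum_add_distrib]
  exact sum_congr rfl fun _ _ => sum_congr rfl fun _ _ => by ring

theorem sum_sum_mul_mul_div_of_imp {ι X K : Type*} [Field K]
    (s : Finset ι) (t : Finset X) (g : ι → X → K) (q a : X → K)
    (h : ∀ x, q x = 0 → a x = 0) :
    ∑ i ∈ s, ∑ x ∈ t, g i x * q x * (a x / q x) = ∑ i ∈ s, ∑ x ∈ t, g i x * a x := by
  simp only [mul_assoc, mul_div_cancel_of_imp' (h _)]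

theorem mixture_prior_lagrangian_general {X : Type*} [Fintype X] (n : ℕ)
    (g : ℕ → X → ℝ) (qP qLI : X → ℝ)
    (r rLI : X → ℝ → ℝ) (pol : X → ℝ) (lam : ℝ)
    (qmix : X → ℝ)
    (rmix : X → ℝ → ℝ)
    (hrmix : ∀ x δ, rmix x δ = (qP x * r x δ + lam * qLI x * rLI x δ) / qmix x)
    (hpos : ∀ x, qP x * r x (pol x) + lam * qLI x * rLI x (pol x) ≠ 0 → 0 < qmix x) :
    ((∑ t ∈ Finset.range (n + 1), ∑ x, (g t x * qP x) * r x (pol x))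
        + lam * ∑ t ∈ Finset.range (n + 1), ∑ x, (g t x * qLI x) * rLI x (pol x)
      = ∑ t ∈ Finset.range (n + 1), ∑ x,
          g t x * (qP x * r x (pol x) + lam * qLI x * rLI x (pol x))) ∧
    ((∑ t ∈ Finset.range (n + 1), ∑ x, (g t x * qP x) * r x (pol x))
        + lam * ∑ t ∈ Finset.range (n + 1), ∑ x, (g t x * qLI x) * rLI x (pol x)
      = ∑ t ∈ Finset.range (n + 1), ∑ x, (g t x * qmix x) * rmix x (pol x)) := by
  have lagrangian := sum_sum_mul_mul_add_mul_sum_sum (range (n + 1)) univ g qP qLI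
    (fun x => r x (pol x)) (fun x => rLI x (pol x)) lam
  have numerator_vanishes (x : X) (hq : qmix x = 0) :
      qP x * r x (pol x) + lam * qLI x * rLI x (pol x) = 0 :=
    by_contra fun hN => (hpos x hN).ne' hq
  refine ⟨lagrangian, lagrangian.trans ?_⟩
  simp only [hrmix]
  exact (sum_sum_mul_mul_div_of_imp _ _ g qmix _ numerator_vanishes).symm

/-- mixture-prior representation of the robustness Lagrangian.  With
predictive laws `P_μ^π(X_t = x) = g_t^π(x) q_μ(x)` and the integrated likelihood affine
in the prior, so that the mixture prior `Π_mix = (1/(1+λ))Π + (λ/(1+λ))Π_LI` has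
`q_mix = (q_Π + λ q_LI)/(1+λ)`, the Lagrangian
`E_Π^π[Σ_t r(X_t, δ_t)] + λ·E_LI^π[Σ_t r_LI(X_t, δ_t)]` equals
`Σ_t Σ_x g_t^π(x)·[q_Π(x) r(x, π(x)) + λ q_LI(x) r_LI(x, π(x))]`, which is the expected
total reward under the `Π_mix`-predictive law of the reweighted reward
`r_mix(x, δ) = (q_Π(x) r(x,δ) + λ q_LI(x) r_LI(x,δ))/q_mix(x)`, provided
`q_mix(x) > 0` whenever the numerator is nonzero. -/
theorem mixture_prior_lagrangian {X : Type*} [Fintype X] (n : ℕ)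
    (g : ℕ → X → ℝ) (qP qLI : X → ℝ)
    (r rLI : X → ℝ → ℝ) (pol : X → ℝ) (lam : ℝ) (hlam : 0 ≤ lam)
    (qmix : X → ℝ) (hqmix : ∀ x, qmix x = (qP x + lam * qLI x) / (1 + lam))
    (rmix : X → ℝ → ℝ)
    (hrmix : ∀ x δ, rmix x δ = (qP x * r x δ + lam * qLI x * rLI x δ) / qmix x)
    (hpos : ∀ x, qP x * r x (pol x) + lam * qLI x * rLI x (pol x) ≠ 0 → 0 < qmix x) :
    ((∑ t ∈ Finset.range (n + 1), ∑ x, (g t x * qP x) * r x (pol x))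
        + lam * ∑ t ∈ Finset.range (n + 1), ∑ x, (g t x * qLI x) * rLI x (pol x)
      = ∑ t ∈ Finset.range (n + 1), ∑ x,
          g t x * (qP x * r x (pol x) + lam * qLI x * rLI x (pol x))) ∧
    ((∑ t ∈ Finset.range (n + 1), ∑ x, (g t x * qP x) * r x (pol x))
        + lam * ∑ t ∈ Finset.range (n + 1), ∑ x, (g t x * qLI x) * rLI x (pol x)
      = ∑ t ∈ Finset.range (n + 1), ∑ x, (g t x * qmix x) * rmix x (pol x)) :=
  mixture_prior_lagrangian_general n g qP qLI r rLI pol lam qmix rmix hrmix hpos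
end
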